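/- arXiv:2112.13493 — 2 statements merged into one kernel-verified Lean document; each statement's English description precedes it below -/
import Mathlib

section
/- In a pre-Hilbert left 𝕆-module H, for all u, v ∈ H and p ∈ 𝕆 one has ⟨u, p·v⟩ = ⟨u, v⟩·conj(p) + [p,u,v], where [p,u,v] := ⟨p·u, v⟩ − p·⟨u, v⟩. -/
noncomputable section

/-- The octonions, realized as the Cayley–Dickson double of the quaternions. -/
abbrev 𝕆 : Type := Quaternion ℝ × Quaternion ℝ

/-- Octonion multiplication via the Cayley–Dickson formula
`(a,b)(c,d) = (ac - d̄b, da + bc̄)`. -/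
def omul (x y : 𝕆) : 𝕆 :=
  (x.1 * y.1 - star y.2 * x.2, y.2 * x.1 + x.2 * star y.1)

/-- Octonionic conjugation. -/
def oconj (x : 𝕆) : 𝕆 := (star x.1, -x.2)

/-- The octonion `1`. -/
def oone : 𝕆 := (1, 0)

/-- Real part of an octonion. -/
def ore (x : 𝕆) : ℝ := x.1.re

/-- Embedding of the reals into the octonions. -/
def oreal (r : ℝ) : 𝕆 := ((r : Quaternion ℝ), 0)

/-- Squared norm of an octonion. -/
def onormSq (x : 𝕆) : ℝ := ore (omul x (oconj x))

/-- A pre-Hilbert left `𝕆`-module: a real vector space `H` with an `ℝ`-linear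
left `𝕆`-scalar multiplication `sm` satisfying `1·x = x` and the alternating
left-associator law, together with an `ℝ`-bilinear `𝕆`-valued inner product `inn`
which is `𝕆`-para-linear, hermitian and positive definite. -/
structure PreHilbO (H : Type*) [AddCommGroup H] [Module ℝ H] where
  sm : 𝕆 →ₗ[ℝ] H →ₗ[ℝ] H
  inn : H →ₗ[ℝ] H →ₗ[ℝ] 𝕆
  one_sm : ∀ x : H, sm oone x = x
  alt : ∀ (p q : 𝕆) (x : H),
    sm (omul p q) x - sm p (sm q x) = -(sm (omul q p) x - sm q (sm p x))
  para : ∀ (p : 𝕆) (u v : H), ore (inn (sm p u) v - omul p (inn u v)) = 0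
  herm : ∀ u v : H, inn u v = oconj (inn v u)
  pos : ∀ u : H, ∃ r : ℝ, 0 ≤ r ∧ inn u u = oreal r
  posdef : ∀ u : H, inn u u = 0 → u = 0


/-! Writing `[p,u,v] = ⟨p·u, v⟩ - p⟨u,v⟩`, para-linearity says that `[p,u,v]` is purely
imaginary, so hermitian symmetry gives
`⟨u, p·v⟩ = conj (p⟨v,u⟩ + [p,v,u]) = ⟨u,v⟩ conj p - [p,v,u]`.
It remains to see that `[p,·,·]` is alternating; by polarization it suffices that
`[t,w,w] = 0`. As `⟨w,w⟩` is real, para-linearity turns `Re (q [t,w,w])` into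
`Re ⟨q·(t·w) - (q t)·w, w⟩`, which is antisymmetric in `(q,t)` by the alternative law of the
module, while hermitian symmetry shows that it is symmetric in `(q,t)`. Hence
`Re (q [t,w,w]) = 0` for all `q`, and the trace form `Re (q x)` is nondegenerate. -/

lemma oconj_add (x y : 𝕆) : oconj (x + y) = oconj x + oconj y := by
  simp only [oconj, Prod.fst_add, Prod.snd_add, star_add, neg_add, Prod.mk_add_mk]

lemma oconj_omul (x y : 𝕆) : oconj (omul x y) = omul (oconj y) (oconj x) := by
  simp [omul, oconj]

lemma oconj_eq_neg_of_ore_eq_zero {x : 𝕆} (hx : ore x = 0) : oconj x = -x := by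
  simp only [ore] at hx
  ext <;> simp [oconj, hx]

lemma ore_oconj (x : 𝕆) : ore (oconj x) = ore x := by
  simp [ore, oconj]

lemma ore_omul_comm (x y : 𝕆) : ore (omul x y) = ore (omul y x) := by
  simp [omul, ore, Quaternion.re_mul]
  ring

lemma ore_omul_oconj (q x : 𝕆) :
    ore (omul q (oconj x)) = 2 * ore q * ore x - ore (omul q x) := by
  simp [omul, oconj, ore, Quaternion.re_mul]
  ring

lemma omul_add_right (x y z : 𝕆) : omul x (y + z) = omul x y + omul x z := by
  simp only [omul, Prod.fst_add, Prod.snd_add, star_add, mul_add, add_mul, Prod.mk_add_mk]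
  congr 1 <;> abel

lemma omul_sub_right (x y z : 𝕆) : omul x (y - z) = omul x y - omul x z := by
  simp only [omul, Prod.fst_sub, Prod.snd_sub, star_sub, mul_sub, sub_mul, Prod.mk_sub_mk]
  congr 1 <;> abel

lemma ore_sub (x y : 𝕆) : ore (x - y) = ore x - ore y := by
  simp [ore]

lemma ore_omul_oreal (x : 𝕆) (r : ℝ) : ore (omul x (oreal r)) = r * ore x := by
  simp [omul, oreal, ore]
  ring

lemma ore_omul_omul_oreal (q t : 𝕆) (r : ℝ) :
    ore (omul q (omul t (oreal r))) = r * ore (omul q t) := by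
  simp [omul, oreal, ore, Quaternion.re_mul]
  ring

lemma ore_omul_oconj_self (a : 𝕆) :
    ore (omul (oconj a) a) = Quaternion.normSq a.1 + Quaternion.normSq a.2 := by
  simp [omul, oconj, ore, Quaternion.star_mul_self]

lemma eq_zero_of_forall_ore_omul_eq_zero {a : 𝕆} (ha : ∀ q : 𝕆, ore (omul q a) = 0) :
    a = 0 := by
  have hsum := ore_omul_oconj_self a
  rw [ha] at hsum
  have h1 := Quaternion.normSq_nonneg (a := a.1)
  have h2 := Quaternion.normSq_nonneg (a := a.2)
  ext1
  · exact Quaternion.normSq_eq_zero.mp (by linarith)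
  · exact Quaternion.normSq_eq_zero.mp (by linarith)

namespace PreHilbO

variable {H : Type*} [AddCommGroup H] [Module ℝ H] (h : PreHilbO H)

def assoc (p : 𝕆) (u v : H) : 𝕆 := h.inn (h.sm p u) v - omul p (h.inn u v)

lemma ore_assoc (p : 𝕆) (u v : H) : ore (h.assoc p u v) = 0 := h.para p u v

lemma ore_omul_inn (q : 𝕆) (u v : H) : ore (omul q (h.inn u v)) = ore (h.inn (h.sm q u) v) := by
  have := h.para q u v
  simp only [ore, Prod.fst_sub, Quaternion.re_sub, sub_eq_zero] at this ⊢
  exact this.symm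

lemma ore_omul_assoc_self (q t : 𝕆) (w : H) :
    ore (omul q (h.assoc t w w)) = ore (h.inn (h.sm q (h.sm t w) - h.sm (omul q t) w) w) := by
  obtain ⟨r, -, hr⟩ := h.pos w
  have hqt : ore (omul q (omul t (h.inn w w))) = ore (h.inn (h.sm (omul q t) w) w) := by
    rw [← h.ore_omul_inn, hr, ore_omul_omul_oreal, ore_omul_oreal]
  rw [assoc, omul_sub_right, ore_sub, hqt, h.ore_omul_inn, map_sub, LinearMap.sub_apply, ore_sub]

lemma ore_omul_assoc_self_comm (q t : 𝕆) (w : H) :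
    ore (omul q (h.assoc t w w)) = ore (omul t (h.assoc q w w)) := by
  obtain ⟨r, -, hr⟩ := h.pos w
  have key : ∀ q t : 𝕆, ore (omul q (h.inn (h.sm t w) w))
      = 2 * ore q * ore (omul t (h.inn w w)) - ore (h.inn (h.sm q w) (h.sm t w)) := by
    intro q t
    rw [h.herm (h.sm t w), ore_omul_oconj, ore_omul_inn, h.herm w, ore_oconj, ore_omul_inn]
  have hinn : ore (h.inn (h.sm q w) (h.sm t w)) = ore (h.inn (h.sm t w) (h.sm q w)) := by
    rw [h.herm (h.sm q w), ore_oconj]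
  simp only [assoc, omul_sub_right, ore_sub, key, hr, ore_omul_oreal, ore_omul_omul_oreal, hinn,
    ore_omul_comm q t]
  ring

lemma assoc_self (t : 𝕆) (w : H) : h.assoc t w w = 0 := by
  refine eq_zero_of_forall_ore_omul_eq_zero fun q => ?_
  have hanti : ore (omul q (h.assoc t w w)) = -ore (omul t (h.assoc q w w)) := by
    have e : h.sm q (h.sm t w) - h.sm (omul q t) w = -(h.sm t (h.sm q w) - h.sm (omul t q) w) := by
      rw [← neg_sub, h.alt, neg_neg, neg_sub]
    rw [ore_omul_assoc_self, ore_omul_assoc_self, e, map_neg, LinearMap.neg_apply]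
    simp [ore]
  linarith [h.ore_omul_assoc_self_comm q t w]

lemma assoc_swap (p : 𝕆) (u v : H) : h.assoc p v u = -h.assoc p u v := by
  have huv := h.assoc_self p (u + v)
  have huu := h.assoc_self p u
  have hvv := h.assoc_self p v
  simp only [assoc, map_add, LinearMap.add_apply, omul_add_right] at huv huu hvv ⊢
  linear_combination (norm := abel_nf) huv - huu - hvv

end PreHilbO

/-- In a pre-Hilbert left octonionic module:
inn u (p*v) = (inn u v)*conj(p) + [p,u,v]. -/
theorem stmt_4 {H : Type*} [AddCommGroup H] [Module ℝ H] (h : PreHilbO H)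
    (p : 𝕆) (u v : H) :
    h.inn u (h.sm p v)
      = omul (h.inn u v) (oconj p) + (h.inn (h.sm p u) v - omul p (h.inn u v)) := by
  calc h.inn u (h.sm p v) = oconj (omul p (h.inn v u) + h.assoc p v u) := by
        rw [PreHilbO.assoc, add_sub_cancel, h.herm]
    _ = omul (h.inn u v) (oconj p) - h.assoc p v u := by
        rw [oconj_add, oconj_omul, ← h.herm, oconj_eq_neg_of_ore_eq_zero (h.ore_assoc p v u),
          sub_eq_add_neg]
    _ = _ := by rw [h.assoc_swap, sub_neg_eq_add, PreHilbO.assoc]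
end
end

section
/- Let H be a pre-Hilbert left 𝕆-module, u ∈ H an associative element ((pq)·u = p·(q·u) for all p,q ∈ 𝕆), and v ∈ H a conjugate associative element ((pq)·v = q·(p·v) for all p,q ∈ 𝕆). Then ⟨u, v⟩ = 0. -/
noncomputable section

/-!
Para-linearity only controls real parts, but real parts of products already detect octonions:
`x = y` as soon as `Re (q x) = Re (q y)` for all `q`. For associative `u` this upgrades
para-linearity to `⟨p u, w⟩ = p ⟨u, w⟩`; for conjugate associative `v` it gives
`⟨p v, w⟩ = ⟨v, w⟩ p`, hence `⟨w, p v⟩ = p̄ ⟨w, v⟩` by hermiticity. Expanding `⟨p u, q̄ v⟩` in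
both orders shows that all left multiplications commute on `c = ⟨u, v⟩`, whereas in the octonions
`i (j c) = - j (i c)`; so `c = 0`.
-/

lemma ore_omul_comm_s8 (a b : 𝕆) : ore (omul a b) = ore (omul b a) := by
  simp only [ore, omul, Quaternion.re_sub, Quaternion.re_mul, Quaternion.re_star,
    Quaternion.imI_star, Quaternion.imJ_star, Quaternion.imK_star, neg_mul, sub_neg_eq_add]
  ring

lemma ore_omul_assoc (a b c : 𝕆) : ore (omul (omul a b) c) = ore (omul a (omul b c)) := by
  simp only [ore, omul, Quaternion.re_sub, Quaternion.re_add, Quaternion.re_mul,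
    Quaternion.imI_sub, Quaternion.imI_add, Quaternion.imI_mul,
    Quaternion.imJ_sub, Quaternion.imJ_add, Quaternion.imJ_mul,
    Quaternion.imK_sub, Quaternion.imK_add, Quaternion.imK_mul,
    Quaternion.re_star, Quaternion.imI_star, Quaternion.imJ_star, Quaternion.imK_star,
    star_add, star_sub, star_mul, star_star, mul_neg, neg_mul, neg_neg, sub_neg_eq_add]
  ring

lemma ore_omul_sub (q x y : 𝕆) : ore (omul q (x - y)) = ore (omul q x) - ore (omul q y) := by
  simp only [ore, omul, Prod.fst_sub, Prod.snd_sub, mul_sub, star_sub, sub_mul, Quaternion.re_sub]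
  ring

lemma ore_oconj_omul_self (x : 𝕆) :
    ore (omul (oconj x) x) = Quaternion.normSq x.1 + Quaternion.normSq x.2 := by
  simp only [ore, omul, oconj, mul_neg, sub_neg_eq_add, neg_mul, add_neg_cancel, Quaternion.re_add,
    Quaternion.re_mul, Quaternion.re_star, Quaternion.imI_star, Quaternion.imJ_star,
    Quaternion.imK_star, Quaternion.normSq_def']
  ring

lemma oconj_oconj (x : 𝕆) : oconj (oconj x) = x := by
  simp [oconj]

lemma oconj_omul_s8 (a b : 𝕆) : oconj (omul a b) = omul (oconj b) (oconj a) := by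
  simp [oconj, omul]

lemma eq_of_forall_ore_omul_eq {x y : 𝕆} (h : ∀ q : 𝕆, ore (omul q x) = ore (omul q y)) :
    x = y := by
  have hd : ore (omul (oconj (x - y)) (x - y)) = 0 := by rw [ore_omul_sub, h, sub_self]
  rw [ore_oconj_omul_self, add_eq_zero_iff_of_nonneg Quaternion.normSq_nonneg
    Quaternion.normSq_nonneg, Quaternion.normSq_eq_zero, Quaternion.normSq_eq_zero] at hd
  exact sub_eq_zero.1 (Prod.ext hd.1 hd.2)

def quatI : Quaternion ℝ := ⟨0, 1, 0, 0⟩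

def quatJ : Quaternion ℝ := ⟨0, 0, 1, 0⟩

lemma eq_zero_of_forall_omul_left_comm {c : 𝕆}
    (h : ∀ p q : 𝕆, omul p (omul q c) = omul q (omul p c)) : c = 0 := by
  have hij := h (quatI, 0) (quatJ, 0)
  simp only [omul, mul_zero, sub_zero, zero_mul, add_zero, star_mul, Prod.ext_iff,
    Quaternion.ext_iff, Quaternion.re_mul, Quaternion.imI_mul, Quaternion.imJ_mul,
    Quaternion.imK_mul] at hij
  simp only [quatI, quatJ, zero_mul, sub_self, one_mul, zero_sub, sub_zero, mul_neg, neg_zero,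
    add_zero, zero_add, sub_neg_eq_add, mul_zero, mul_one] at hij
  obtain ⟨⟨h₁, h₂, h₃, h₄⟩, h₅, h₆, h₇, h₈⟩ := hij
  refine Prod.ext (Quaternion.ext _ _ ?_ ?_ ?_ ?_) (Quaternion.ext _ _ ?_ ?_ ?_ ?_) <;>
    simp only [Prod.fst_zero, Prod.snd_zero, Quaternion.re_zero, Quaternion.imI_zero,
      Quaternion.imJ_zero, Quaternion.imK_zero] <;> linarith

namespace PreHilbO

variable {H : Type*} [AddCommGroup H] [Module ℝ H] (h : PreHilbO H)

lemma ore_inn_sm (p : 𝕆) (u w : H) : ore (h.inn (h.sm p u) w) = ore (omul p (h.inn u w)) := by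
  rw [← sub_eq_zero, ← h.para p u w]
  simp [ore]

lemma inn_sm_left_of_assoc {u : H} (hu : ∀ p q : 𝕆, h.sm (omul p q) u = h.sm p (h.sm q u))
    (p : 𝕆) (w : H) : h.inn (h.sm p u) w = omul p (h.inn u w) :=
  eq_of_forall_ore_omul_eq fun q => by
    rw [← ore_inn_sm, ← hu, ore_inn_sm, ore_omul_assoc]

lemma inn_sm_left_of_conjAssoc {v : H} (hv : ∀ p q : 𝕆, h.sm (omul p q) v = h.sm q (h.sm p v))
    (p : 𝕆) (w : H) : h.inn (h.sm p v) w = omul (h.inn v w) p :=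
  eq_of_forall_ore_omul_eq fun q => by
    rw [← ore_inn_sm, ← hv, ore_inn_sm, ore_omul_comm_s8, ← ore_omul_assoc, ore_omul_comm_s8]

lemma inn_sm_right_of_conjAssoc {v : H}
    (hv : ∀ p q : 𝕆, h.sm (omul p q) v = h.sm q (h.sm p v)) (p : 𝕆) (w : H) :
    h.inn w (h.sm p v) = omul (oconj p) (h.inn w v) := by
  rw [h.herm, h.inn_sm_left_of_conjAssoc hv, oconj_omul_s8, ← h.herm]

end PreHilbO

/-- An associative element is orthogonal to a conjugate associative element. -/
theorem stmt_8 {H : Type*} [AddCommGroup H] [Module ℝ H] (h : PreHilbO H)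
    (u v : H)
    (hu : ∀ p q : 𝕆, h.sm (omul p q) u = h.sm p (h.sm q u))
    (hv : ∀ p q : 𝕆, h.sm (omul p q) v = h.sm q (h.sm p v)) :
    h.inn u v = 0 := by
  refine eq_zero_of_forall_omul_left_comm fun p q => ?_
  calc omul p (omul q (h.inn u v))
      = h.inn (h.sm p u) (h.sm (oconj q) v) := by
        rw [h.inn_sm_left_of_assoc hu, h.inn_sm_right_of_conjAssoc hv, oconj_oconj]
    _ = omul q (omul p (h.inn u v)) := by
        rw [h.inn_sm_right_of_conjAssoc hv, h.inn_sm_left_of_assoc hu, oconj_oconj]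
end
end
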